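/- arXiv:2002.04463 — 13 statements merged into one kernel-verified Lean document; each statement's English description precedes it below -/
import Mathlib

section
/- For any real numbers x, y ≥ 0 and parameters p > 0, 0 < q ≤ 1, the function h_{p,q}(x) = log(1 + x^q / p) is subadditive: h_{p,q}(x + y) ≤ h_{p,q}(x) + h_{p,q}(y). -/
/-! Since `q ≤ 1`, `t ↦ t ^ q` is subadditive on `[0, ∞)`, and `1 + a + b ≤ (1 + a) * (1 + b)`
for `a, b ≥ 0`; taking logarithms turns the product into a sum. -/

open Real

theorem Real.log_one_add_add_le {a b : ℝ} (ha : 0 ≤ a) (hb : 0 ≤ b) :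
    log (1 + (a + b)) ≤ log (1 + a) + log (1 + b) := by
  rw [← log_mul (by positivity) (by positivity)]
  exact log_le_log (by positivity) (by nlinarith [mul_nonneg ha hb])

/-- For x, y ≥ 0, p > 0, 0 < q ≤ 1, the function
`h_{p,q}(x) = log(1 + x^q / p)` is subadditive. -/
theorem hpq_subadditive (p q x y : ℝ) (hp : 0 < p) (hq0 : 0 < q) (hq1 : q ≤ 1)
    (hx : 0 ≤ x) (hy : 0 ≤ y) :
    Real.log (1 + (x + y) ^ q / p) ≤
      Real.log (1 + x ^ q / p) + Real.log (1 + y ^ q / p) :=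
  calc log (1 + (x + y) ^ q / p) ≤ log (1 + (x ^ q / p + y ^ q / p)) := by
        rw [← add_div]
        gcongr
        exact rpow_add_le_add_rpow hx hy hq0.le hq1
    _ ≤ log (1 + x ^ q / p) + log (1 + y ^ q / p) :=
        log_one_add_add_le (by positivity) (by positivity)
end

section
/- The function x ↦ log(1 + x^q / p) / x is strictly decreasing on (0, ∞) for any fixed p > 0 and 0 < q ≤ 1. -/
/-!
The function `x ↦ log (1 + x ^ q / p)` is strictly concave on `[0, ∞)`, being the strictly
concave increasing `log` composed with the concave injective `x ↦ 1 + x ^ q / p`, and it vanishes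
at `0`. Hence its slope from the origin, `log (1 + x ^ q / p) / x`, is strictly decreasing.
-/

open Set Real

theorem StrictConcaveOn.comp_concaveOn_of_mapsTo {𝕜 E α β : Type*} [Semiring 𝕜] [PartialOrder 𝕜]
    [AddCommMonoid E] [AddCommMonoid α] [PartialOrder α] [AddCommMonoid β] [PartialOrder β]
    [SMul 𝕜 E] [SMul 𝕜 α] [SMul 𝕜 β] {s : Set E} {t : Set β} {f : E → β} {g : β → α}
    (hg : StrictConcaveOn 𝕜 t g) (hf : ConcaveOn 𝕜 s f) (hst : MapsTo f s t)
    (hg' : MonotoneOn g t) (hf' : InjOn f s) : StrictConcaveOn 𝕜 s (g ∘ f) := by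
  refine ⟨hf.1, fun x hx y hy hxy a b ha hb hab => ?_⟩
  calc a • g (f x) + b • g (f y) < g (a • f x + b • f y) :=
        hg.2 (hst hx) (hst hy) (hf'.ne hx hy hxy) ha hb hab
    _ ≤ g (f (a • x + b • y)) :=
        hg' (hg.1 (hst hx) (hst hy) ha.le hb.le hab) (hst (hf.1 hx hy ha.le hb.le hab))
          (hf.2 hx hy ha.le hb.le hab)

theorem StrictConcaveOn.strictAntiOn_div_Ioi {𝕜 : Type*} [Field 𝕜] [LinearOrder 𝕜]
    [IsStrictOrderedRing 𝕜] {f : 𝕜 → 𝕜} (hf : StrictConcaveOn 𝕜 (Ici 0) f) (h0 : f 0 = 0) :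
    StrictAntiOn (fun x => f x / x) (Ioi 0) := by
  intro x hx y hy hxy
  simpa [h0] using hf.secant_strict_mono self_mem_Ici (Ioi_subset_Ici_self hx)
    (Ioi_subset_Ici_self hy) hx.ne' (ne_of_gt hy) hxy

theorem concaveOn_one_add_rpow_div {p q : ℝ} (hp : 0 ≤ p) (hq0 : 0 ≤ q) (hq1 : q ≤ 1) :
    ConcaveOn ℝ (Ici 0) fun x : ℝ => 1 + x ^ q / p := by
  have := ((concaveOn_rpow hq0 hq1).smul (inv_nonneg.2 hp)).add_const 1
  refine this.congr fun x _ => ?_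
  simp only [Pi.add_apply, smul_eq_mul]
  ring

theorem injOn_one_add_rpow_div {p q : ℝ} (hp : p ≠ 0) (hq : q ≠ 0) :
    InjOn (fun x : ℝ => 1 + x ^ q / p) (Ici 0) := fun x hx y hy hxy =>
  rpow_left_injOn hq hx hy (by simpa [hp] using hxy)

theorem strictConcaveOn_log_one_add_rpow_div {p q : ℝ} (hp : 0 < p) (hq0 : 0 < q) (hq1 : q ≤ 1) :
    StrictConcaveOn ℝ (Ici 0) fun x : ℝ => log (1 + x ^ q / p) :=
  strictConcaveOn_log_Ioi.comp_concaveOn_of_mapsTo (concaveOn_one_add_rpow_div hp.le hq0.le hq1)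
    (fun _ hx => add_pos_of_pos_of_nonneg one_pos (div_nonneg (rpow_nonneg hx q) hp.le))
    strictMonoOn_log.monotoneOn (injOn_one_add_rpow_div hp.ne' hq0.ne')

/-- x ↦ log(1 + x^q/p) / x is strictly decreasing on (0, ∞). -/
theorem hpq_div_strictAnti (p q : ℝ) (hp : 0 < p) (hq0 : 0 < q) (hq1 : q ≤ 1) :
    StrictAntiOn (fun x : ℝ => Real.log (1 + x ^ q / p) / x) (Set.Ioi 0) :=
  (strictConcaveOn_log_one_add_rpow_div hp hq0 hq1).strictAntiOn_div_Ioi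
    (by simp [zero_rpow hq0.ne'])
end

section
/- Let f : ℝⁿ → ℝ be a convex function, and fix x, y ∈ ℝⁿ. If lim inf_{λ → ∞} f(x + λ y) < ∞, then λ ↦ f(x + λ y) is a nonincreasing function of λ on ℝ. -/
/-- if f : ℝⁿ → ℝ is convex and liminf_{λ→∞} f(x + λy) < ∞,
then λ ↦ f(x + λy) is nonincreasing on ℝ. -/
theorem convex_liminf_lt_top_antitone {n : ℕ} (f : (Fin n → ℝ) → ℝ)
    (hf : ConvexOn ℝ Set.univ f) (x y : Fin n → ℝ)
    (hlim : Filter.liminf (fun t : ℝ => (f (x + t • y) : EReal)) Filter.atTop < ⊤) :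
    Antitone fun t : ℝ => f (x + t • y) := by
  set g : ℝ → ℝ := fun t => f (x + t • y) with hg
  have hgc : ConvexOn ℝ Set.univ g := by
    have := hf.comp_affineMap (AffineMap.lineMap x (x + y))
    have heq : (f ∘ ⇑(AffineMap.lineMap x (x + y))) = g := by
      funext t
      simp [AffineMap.lineMap_apply, hg, add_comm]
    rw [heq] at this
    simpa using this
  intro a b hab
  by_contra h
  push_neg at h
  rcases eq_or_lt_of_le hab with rfl | hab'
  · exact lt_irrefl _ h
  -- g a < g b with a < b; slope c := (g b - g a)/(b - a) > 0
  have hc : 0 < (g b - g a) / (b - a) := div_pos (by linarith) (by linarith)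
  set c := (g b - g a) / (b - a) with hcdef
  have key : ∀ t, b < t → g b + c * (t - b) ≤ g t := by
    intro t hbt
    have := hgc.slope_mono_adjacent (Set.mem_univ a) (Set.mem_univ t) hab' hbt
    have hbt' : 0 < t - b := by linarith
    have : c ≤ (g t - g b) / (t - b) := this
    have := (le_div_iff₀ hbt').mp this
    linarith
  have htend : Filter.Tendsto g Filter.atTop Filter.atTop := by
    apply Filter.tendsto_atTop_mono' Filter.atTop
      (Filter.eventually_atTop.mpr ⟨b + 1, fun t ht => key t (by linarith)⟩)
    have : Filter.Tendsto (fun t : ℝ => g b + c * (t - b)) Filter.atTop Filter.atTop := by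
      apply Filter.tendsto_atTop_add_const_left
      exact (Filter.tendsto_atTop_add_const_right _ _ Filter.tendsto_id).const_mul_atTop hc
    exact this
  have htend' : Filter.Tendsto (fun t : ℝ => (g t : EReal)) Filter.atTop (nhds ⊤) := by
    rw [EReal.tendsto_nhds_top_iff_real]
    intro M
    filter_upwards [htend.eventually_gt_atTop M] with t ht
    exact_mod_cast ht
  have := htend'.liminf_eq
  rw [this] at hlim
  exact lt_irrefl _ hlim
end

section
/- Let x, y ∈ ℝⁿ be vectors with nonnegative entries and fix 0 < q ≤ 1. Suppose there exists p* > 0 such that Σᵢ log(1 + xᵢ^q / p) = Σᵢ log(1 + yᵢ^q / p) for all p ∈ (0, p*]. Then the multiset of entries of x equals the multiset of entries of y (in particular their nonincreasing rearrangements coincide). -/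
open Polynomial in
lemma aux_poly_roots (n : ℕ) (a : Fin n → ℝ) :
    (∏ i, (X + C (a i))).roots = Finset.univ.val.map (fun i => -(a i)) := by
  have : (∏ i, (X + C (a i)))
      = ((Finset.univ.val.map (fun i => -(a i))).map (fun r => X - C r)).prod := by
    rw [Multiset.map_map, Finset.prod_eq_multiset_prod]
    congr 1
    apply Multiset.map_congr rfl
    intro i _
    simp [sub_neg_eq_add]
  rw [this, Polynomial.roots_multiset_prod_X_sub_C]

lemma aux_prod_eq (n : ℕ) (p : ℝ) (hp : 0 < p) (a : Fin n → ℝ) (ha : ∀ i, 0 ≤ a i) :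
    ∏ i, (p + a i) = Real.exp (∑ i, Real.log (1 + a i / p)) * p ^ n := by
  rw [Real.exp_sum]
  have h1 : ∀ i : Fin n, Real.exp (Real.log (1 + a i / p)) = 1 + a i / p := fun i =>
    Real.exp_log (by have := ha i; positivity)
  rw [Finset.prod_congr rfl (fun i _ => h1 i),
    show (p : ℝ) ^ n = ∏ _i : Fin n, p by simp, ← Finset.prod_mul_distrib]
  apply Finset.prod_congr rfl
  intro i _
  field_simp

/-- if ‖x‖_{h_{p,q}} = ‖y‖_{h_{p,q}} for all p ∈ (0, p*], then the
multisets of entries of x and y coincide. -/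
theorem hnorm_eq_implies_same_multiset (n : ℕ) (q pstar : ℝ)
    (hq0 : 0 < q) (hq1 : q ≤ 1) (hps : 0 < pstar)
    (x y : Fin n → ℝ) (hx : ∀ i, 0 ≤ x i) (hy : ∀ i, 0 ≤ y i)
    (heq : ∀ p : ℝ, 0 < p → p ≤ pstar →
      ∑ i, Real.log (1 + x i ^ q / p) = ∑ i, Real.log (1 + y i ^ q / p)) :
    Finset.univ.val.map x = Finset.univ.val.map y := by
  have ha : ∀ i, 0 ≤ x i ^ q := fun i => Real.rpow_nonneg (hx i) q
  have hb : ∀ i, 0 ≤ y i ^ q := fun i => Real.rpow_nonneg (hy i) q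
  have hprod : ∀ p : ℝ, p ∈ Set.Ioc 0 pstar →
      ∏ i, (p + x i ^ q) = ∏ i, (p + y i ^ q) := by
    intro p hp
    rw [aux_prod_eq n p hp.1 _ ha, aux_prod_eq n p hp.1 _ hb, heq p hp.1 hp.2]
  open Polynomial in
  have hpoly : (∏ i, (X + C (x i ^ q))) = ∏ i, (X + C (y i ^ q)) := by
    apply Polynomial.eq_of_infinite_eval_eq
    apply Set.Infinite.mono (s := Set.Ioc 0 pstar) _ (Set.Ioc_infinite hps)
    intro p hp
    simpa [Polynomial.eval_prod] using hprod p hp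
  have hroots := congrArg Polynomial.roots hpoly
  rw [aux_poly_roots, aux_poly_roots] at hroots
  have hmap := congrArg (Multiset.map (fun t : ℝ => (-t) ^ q⁻¹)) hroots
  rw [Multiset.map_map, Multiset.map_map] at hmap
  have hback : ∀ (z : Fin n → ℝ), (∀ i, 0 ≤ z i) →
      ((fun t : ℝ => (-t) ^ q⁻¹) ∘ fun i => -(z i ^ q)) = z := by
    intro z hz
    funext i
    simp only [Function.comp_apply, neg_neg]
    rw [← Real.rpow_mul (hz i), mul_inv_cancel₀ (ne_of_gt hq0), Real.rpow_one]
  rw [hback x hx, hback y hy] at hmap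
  exact hmap
end

section
/- Fix p > 0 and 0 < q ≤ 1, and let A ∈ ℝ^{m×n}. If every k-sparse vector x* can be recovered by l_{h_{p,q}}-minimization (i.e., x* is the unique minimizer of ‖·‖_{h_{p,q}} subject to Az = Ax*), then for every nonzero v ∈ ker(A) and every index set S ⊆ {1,…,n} with |S| ≤ k, we have ‖v_S‖_{h_{p,q}} < ‖v_{S^c}‖_{h_{p,q}}. -/
open scoped Classical

/-- exact recovery of every k-sparse vector by
l_{h_{p,q}}-minimization implies the strict null space property. -/
theorem recovery_implies_nullspace_property (m n k : ℕ) (p q : ℝ)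
    (hp : 0 < p) (hq0 : 0 < q) (hq1 : q ≤ 1)
    (A : Matrix (Fin m) (Fin n) ℝ)
    (hrec : ∀ xstar : Fin n → ℝ,
      (Finset.univ.filter fun i => xstar i ≠ 0).card ≤ k →
      ∀ z : Fin n → ℝ, A.mulVec z = A.mulVec xstar → z ≠ xstar →
        ∑ i, Real.log (1 + |xstar i| ^ q / p) < ∑ i, Real.log (1 + |z i| ^ q / p))
    (v : Fin n → ℝ) (hv : A.mulVec v = 0) (hv0 : v ≠ 0)
    (S : Finset (Fin n)) (hS : S.card ≤ k) :
    ∑ i ∈ S, Real.log (1 + |v i| ^ q / p) <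
      ∑ i ∈ Sᶜ, Real.log (1 + |v i| ^ q / p) := by
  set xstar : Fin n → ℝ := fun i => if i ∈ S then v i else 0 with hx
  set z : Fin n → ℝ := fun i => if i ∈ S then 0 else -v i with hz
  have hsp : (Finset.univ.filter fun i => xstar i ≠ 0).card ≤ k := by
    refine le_trans (Finset.card_le_card ?_) hS
    intro i hi
    simp only [Finset.mem_filter, hx] at hi
    by_contra h
    simp [h] at hi
  have hzx : z = xstar - v := by
    funext i
    by_cases h : i ∈ S <;> simp [hx, hz, h]
  have hAz : A.mulVec z = A.mulVec xstar := by
    rw [hzx, Matrix.mulVec_sub, hv, sub_zero]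
  have hne : z ≠ xstar := by
    intro h
    apply hv0
    funext i
    have hi := congrFun h i
    by_cases hS' : i ∈ S
    · simpa [hx, hz, hS'] using hi.symm
    · simpa [hx, hz, hS', neg_eq_zero] using hi
  have hmain := hrec xstar hsp z hAz hne
  have e0 : Real.log (1 + |(0 : ℝ)| ^ q / p) = 0 := by
    rw [abs_zero, Real.zero_rpow hq0.ne', zero_div, add_zero, Real.log_one]
  have h1 : ∑ i, Real.log (1 + |xstar i| ^ q / p)
      = ∑ i ∈ S, Real.log (1 + |v i| ^ q / p) := by
    rw [← Finset.sum_add_sum_compl S]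
    have hc : ∑ i ∈ Sᶜ, Real.log (1 + |xstar i| ^ q / p) = 0 := by
      refine Finset.sum_eq_zero fun i hi => ?_
      have : i ∉ S := Finset.mem_compl.mp hi
      simp only [hx, if_neg this]
      exact e0
    rw [hc, add_zero]
    refine Finset.sum_congr rfl fun i hi => ?_
    simp [hx, hi]
  have h2 : ∑ i, Real.log (1 + |z i| ^ q / p)
      = ∑ i ∈ Sᶜ, Real.log (1 + |v i| ^ q / p) := by
    rw [← Finset.sum_add_sum_compl S]
    have hc : ∑ i ∈ S, Real.log (1 + |z i| ^ q / p) = 0 := by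
      refine Finset.sum_eq_zero fun i hi => ?_
      simp only [hz, if_pos hi]
      exact e0
    rw [hc, zero_add]
    refine Finset.sum_congr rfl fun i hi => ?_
    have : i ∉ S := Finset.mem_compl.mp hi
    simp [hz, this]
  rwa [h1, h2] at hmain
end

section
/- Fix p > 0 and 0 < q ≤ 1, and let A ∈ ℝ^{m×n}. If for every nonzero v ∈ ker(A) and every index set S with |S| ≤ k one has ‖v_S‖_{h_{p,q}} < ‖v_{S^c}‖_{h_{p,q}}, then every k-sparse vector x* satisfies ‖x*‖_{h_{p,q}} ≤ ‖x‖_{h_{p,q}} for every x with Ax = Ax*, i.e., x* is a minimizer of the h_{p,q}-norm over its affine fiber {x : Ax = Ax*}. -/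
open scoped Classical

lemma h_nonneg (p q : ℝ) (hp : 0 < p) (t : ℝ) :
    0 ≤ Real.log (1 + |t| ^ q / p) := by
  apply Real.log_nonneg
  have : 0 ≤ |t| ^ q / p := div_nonneg (Real.rpow_nonneg (abs_nonneg t) q) hp.le
  linarith

lemma h_subadd (p q : ℝ) (hp : 0 < p) (hq0 : 0 < q) (hq1 : q ≤ 1) (a b : ℝ) :
    Real.log (1 + |a + b| ^ q / p) ≤
      Real.log (1 + |a| ^ q / p) + Real.log (1 + |b| ^ q / p) := by
  have hab : |a + b| ^ q ≤ |a| ^ q + |b| ^ q := by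
    calc |a + b| ^ q ≤ (|a| + |b|) ^ q :=
          Real.rpow_le_rpow (abs_nonneg _) (abs_add_le a b) hq0.le
      _ ≤ |a| ^ q + |b| ^ q := by
          have := NNReal.rpow_add_le_add_rpow (Real.nnabs a) (Real.nnabs b) hq0.le hq1
          have h' := NNReal.coe_le_coe.2 this
          push_cast at h'
          simpa [Real.coe_nnabs] using h'
  have h1 : (0:ℝ) < 1 + |a| ^ q / p := by
    have : 0 ≤ |a| ^ q / p := div_nonneg (Real.rpow_nonneg (abs_nonneg a) q) hp.le
    linarith
  have h2 : (0:ℝ) < 1 + |b| ^ q / p := by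
    have : 0 ≤ |b| ^ q / p := div_nonneg (Real.rpow_nonneg (abs_nonneg b) q) hp.le
    linarith
  rw [← Real.log_mul h1.ne' h2.ne']
  apply Real.log_le_log (by positivity)
  have ha : 0 ≤ |a| ^ q / p := div_nonneg (Real.rpow_nonneg (abs_nonneg a) q) hp.le
  have hb : 0 ≤ |b| ^ q / p := div_nonneg (Real.rpow_nonneg (abs_nonneg b) q) hp.le
  have : |a + b| ^ q / p ≤ |a| ^ q / p + |b| ^ q / p := by
    rw [← add_div]; gcongr
  nlinarith

/-- the strict null space property implies every k-sparse vector
minimizes the h_{p,q}-norm over its affine fiber. -/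
theorem nullspace_property_implies_recovery (m n k : ℕ) (p q : ℝ)
    (hp : 0 < p) (hq0 : 0 < q) (hq1 : q ≤ 1)
    (A : Matrix (Fin m) (Fin n) ℝ)
    (hnsp : ∀ v : Fin n → ℝ, A.mulVec v = 0 → v ≠ 0 →
      ∀ S : Finset (Fin n), S.card ≤ k →
        ∑ i ∈ S, Real.log (1 + |v i| ^ q / p) <
          ∑ i ∈ Sᶜ, Real.log (1 + |v i| ^ q / p))
    (xstar : Fin n → ℝ)
    (hsparse : (Finset.univ.filter fun i => xstar i ≠ 0).card ≤ k)
    (x : Fin n → ℝ) (hx : A.mulVec x = A.mulVec xstar) :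
    ∑ i, Real.log (1 + |xstar i| ^ q / p) ≤ ∑ i, Real.log (1 + |x i| ^ q / p) := by
  set v : Fin n → ℝ := fun i => xstar i - x i with hv
  by_cases hv0 : v = 0
  · have : xstar = x := by
      funext i
      have := congrFun hv0 i
      simp [hv] at this
      linarith
    simp [this]
  have hAv : A.mulVec v = 0 := by
    have : A.mulVec v = A.mulVec xstar - A.mulVec x := by
      have : v = xstar - x := by funext i; simp [hv]
      rw [this, Matrix.mulVec_sub]
    rw [this, hx, sub_self]
  set S : Finset (Fin n) := Finset.univ.filter fun i => xstar i ≠ 0 with hS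
  have key := hnsp v hAv hv0 S hsparse
  set f : (Fin n → ℝ) → Fin n → ℝ := fun w i => Real.log (1 + |w i| ^ q / p) with hf
  have split : ∀ w : Fin n → ℝ, ∑ i, f w i = ∑ i ∈ S, f w i + ∑ i ∈ Sᶜ, f w i := by
    intro w
    rw [Finset.sum_add_sum_compl]
  rw [split xstar, split x]
  have hxc : ∀ i ∈ Sᶜ, f xstar i = 0 := by
    intro i hi
    simp only [hS, Finset.mem_compl, Finset.mem_filter, Finset.mem_univ, true_and,
      not_not] at hi
    simp [hf, hi, Real.rpow_natCast, hp.ne', Real.zero_rpow hq0.ne']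
  have hvc : ∀ i ∈ Sᶜ, f v i = f x i := by
    intro i hi
    simp only [hS, Finset.mem_compl, Finset.mem_filter, Finset.mem_univ, true_and,
      not_not] at hi
    simp [hf, hv, hi]
  have h1 : ∑ i ∈ S, f xstar i ≤ ∑ i ∈ S, f x i + ∑ i ∈ S, f v i := by
    rw [← Finset.sum_add_distrib]
    apply Finset.sum_le_sum
    intro i _
    have : xstar i = x i + v i := by simp [hv]
    rw [hf]
    simp only
    rw [this]
    exact h_subadd p q hp hq0 hq1 (x i) (v i)
  have h2 : ∑ i ∈ Sᶜ, f xstar i = 0 := Finset.sum_eq_zero hxc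
  have h3 : ∑ i ∈ Sᶜ, f v i = ∑ i ∈ Sᶜ, f x i := Finset.sum_congr rfl hvc
  rw [h2]
  have := key
  rw [h3] at this
  linarith
end

section
/- For any matrix A ∈ ℝ^{m×n}, any sparsity level k, any p > 0 and 0 < q ≤ 1, the h_{p,q}-null space constant satisfies h_{p,q}(A,k) ≤ h_{ℓ₁}(A,k), where h_{ℓ₁}(A,k) is the analogous null space constant defined with the ℓ₁-norm. -/
/-! `φ t = log (1 + t ^ q / p)` is concave and increasing on `[0, ∞)` with `φ 0 = 0`, so `φ t / t`
decreases. Given `v ∈ ker A` and `S`, pass to a set `T` of the same size carrying the largest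
entries `|vᵢ|`. With a threshold `a` between the entries on `T` and those off `T` and `r = φ a / a`,
we get `φ |vᵢ| ≤ r |vᵢ|` on `T` and `r |vⱼ| ≤ φ |vⱼ|` off `T`, so the ℓ₁ inequality for `T` with
constant `c` gives the `φ` inequality for `T` and hence for `S`: every admissible ℓ₁ constant is
admissible for `h_{p,q}`. The sets of admissible constants are both empty exactly when `ker A`
contains a nonzero `k`-sparse vector (for ℓ₁ by norm equivalence on the finite-dimensional
`ker A`), and then both infima are the junk value `sInf ∅ = 0`. -/

open scoped Classical

/-- Null space constant of `A` at order `k` relative to a norm-like function `F`. -/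
noncomputable def nullSpaceConstant {m n : ℕ} (A : Matrix (Fin m) (Fin n) ℝ) (k : ℕ)
    (F : (Fin n → ℝ) → ℝ) : ℝ :=
  sInf {c : ℝ | 0 ≤ c ∧ ∀ v : Fin n → ℝ, A.mulVec v = 0 → v ≠ 0 →
    ∀ S : Finset (Fin n), S.card ≤ k →
      F (fun i => if i ∈ S then v i else 0) ≤ c * F (fun i => if i ∈ Sᶜ then v i else 0)}

open Finset Set Matrix

section Concave

variable {φ : ℝ → ℝ}

theorem ConcaveOn.div_le_div_of_le (hφ : ConcaveOn ℝ (Ici 0) φ) (hφ0 : φ 0 = 0) {s t : ℝ}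
    (hs : 0 < s) (hst : s ≤ t) : φ t / t ≤ φ s / s := by
  have := hφ.antitoneOn_slope_gt (x := 0) self_mem_Ici ⟨hs.le, hs⟩
    ⟨hs.le.trans hst, hs.trans_le hst⟩ hst
  simpa [slope_def_field, hφ0] using this

theorem ConcaveOn.le_div_mul_of_le (hφ : ConcaveOn ℝ (Ici 0) φ) (hφ0 : φ 0 = 0) {a t : ℝ}
    (ha : 0 < a) (hat : a ≤ t) : φ t ≤ φ a / a * t :=
  (div_le_iff₀ (ha.trans_le hat)).1 (hφ.div_le_div_of_le hφ0 ha hat)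

theorem ConcaveOn.div_mul_le_of_le (hφ : ConcaveOn ℝ (Ici 0) φ) (hφ0 : φ 0 = 0) {a t : ℝ}
    (ht : 0 ≤ t) (hta : t ≤ a) : φ a / a * t ≤ φ t := by
  rcases ht.eq_or_lt with rfl | ht
  · simp [hφ0]
  · exact (le_div_iff₀ ht).1 (hφ.div_le_div_of_le hφ0 ht hta)

end Concave

section Rearrangement

variable {ι : Type*} [DecidableEq ι]

theorem le_of_forall_sum_le_sum {g : ι → ℝ} {T : Finset ι}
    (hT : ∀ U : Finset ι, #U = #T → ∑ i ∈ U, g i ≤ ∑ i ∈ T, g i) {i j : ι}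
    (hi : i ∈ T) (hj : j ∉ T) : g j ≤ g i := by
  have hj' : j ∉ T.erase i := fun h => hj (mem_of_mem_erase h)
  have hcard : #(insert j (T.erase i)) = #T := by
    rw [card_insert_of_notMem hj', card_erase_add_one hi]
  have := hT _ hcard
  rw [sum_insert hj', sum_erase_eq_sub hi] at this
  linarith

theorem sum_le_mul_sum_compl_of_top [Fintype ι] {φ : ℝ → ℝ} (hφ : ConcaveOn ℝ (Ici 0) φ)
    (hφmono : MonotoneOn φ (Ici 0)) (hφ0 : φ 0 = 0)
    {x : ι → ℝ} (hx : ∀ i, 0 ≤ x i) {T : Finset ι} (htop : ∀ i ∈ T, ∀ j ∉ T, x j ≤ x i)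
    {c : ℝ} (hc : 0 ≤ c) (h : ∑ i ∈ T, x i ≤ c * ∑ j ∈ Tᶜ, x j) :
    ∑ i ∈ T, φ (x i) ≤ c * ∑ j ∈ Tᶜ, φ (x j) := by
  by_cases hzero : ∀ j ∉ T, x j = 0
  · have hT : ∑ i ∈ T, x i = 0 := by
      refine le_antisymm ?_ (sum_nonneg fun i _ => hx i)
      simpa [sum_eq_zero fun j hj => hzero j (mem_compl.1 hj)] using h
    have hTi := (sum_eq_zero_iff_of_nonneg fun i _ => hx i).1 hT
    rw [sum_eq_zero fun i hi => by rw [hTi i hi, hφ0],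
      sum_eq_zero fun j hj => by rw [hzero j (mem_compl.1 hj), hφ0], mul_zero]
  push Not at hzero
  obtain ⟨j₀, hj₀, hxj₀⟩ := hzero
  obtain ⟨j₁, hj₁, hmax⟩ := (Tᶜ).exists_max_image x ⟨j₀, mem_compl.2 hj₀⟩
  have ha : 0 < x j₁ := (hx j₀).lt_of_ne' hxj₀ |>.trans_le (hmax j₀ (mem_compl.2 hj₀))
  set r := φ (x j₁) / x j₁
  have hr : 0 ≤ r := div_nonneg (hφ0 ▸ hφmono self_mem_Ici ha.le ha.le) ha.le
  calc ∑ i ∈ T, φ (x i)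
      ≤ ∑ i ∈ T, r * x i :=
        sum_le_sum fun i hi => hφ.le_div_mul_of_le hφ0 ha (htop i hi j₁ (mem_compl.1 hj₁))
    _ = r * ∑ i ∈ T, x i := (mul_sum ..).symm
    _ ≤ r * (c * ∑ j ∈ Tᶜ, x j) := mul_le_mul_of_nonneg_left h hr
    _ = c * ∑ j ∈ Tᶜ, r * x j := by rw [mul_left_comm, mul_sum]
    _ ≤ c * ∑ j ∈ Tᶜ, φ (x j) :=
        mul_le_mul_of_nonneg_left
          (sum_le_sum fun j hj => hφ.div_mul_le_of_le hφ0 (hx j) (hmax j hj)) hc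

theorem sum_le_mul_sum_compl [Fintype ι] {φ : ℝ → ℝ} (hφ : ConcaveOn ℝ (Ici 0) φ)
    (hφmono : StrictMonoOn φ (Ici 0)) (hφ0 : φ 0 = 0) {x : ι → ℝ} (hx : ∀ i, 0 ≤ x i)
    {c : ℝ} (hc : 0 ≤ c) {S : Finset ι}
    (h : ∀ T : Finset ι, #T = #S → ∑ i ∈ T, x i ≤ c * ∑ j ∈ Tᶜ, x j) :
    ∑ i ∈ S, φ (x i) ≤ c * ∑ j ∈ Sᶜ, φ (x j) := by
  obtain ⟨T, hTmem, hTmax⟩ := (powersetCard #S (univ : Finset ι)).exists_max_image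
    (fun T => ∑ i ∈ T, φ (x i)) ⟨S, mem_powersetCard_univ.2 rfl⟩
  rw [mem_powersetCard_univ] at hTmem
  have hTmax' : ∀ U : Finset ι, #U = #T → ∑ i ∈ U, φ (x i) ≤ ∑ i ∈ T, φ (x i) :=
    fun U hU => hTmax U (mem_powersetCard_univ.2 (hU.trans hTmem))
  have htop : ∀ i ∈ T, ∀ j ∉ T, x j ≤ x i := fun i hi j hj =>
    (hφmono.le_iff_le (hx j) (hx i)).1 (le_of_forall_sum_le_sum hTmax' hi hj)
  have hST : ∑ i ∈ S, φ (x i) ≤ ∑ i ∈ T, φ (x i) := hTmax' S hTmem.symm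
  have hTS : ∑ j ∈ Tᶜ, φ (x j) ≤ ∑ j ∈ Sᶜ, φ (x j) := by
    linarith [sum_add_sum_compl S (fun i => φ (x i)), sum_add_sum_compl T (fun i => φ (x i))]
  calc ∑ i ∈ S, φ (x i) ≤ ∑ i ∈ T, φ (x i) := hST
    _ ≤ c * ∑ j ∈ Tᶜ, φ (x j) :=
      sum_le_mul_sum_compl_of_top hφ hφmono.monotoneOn hφ0 hx htop hc (h T hTmem)
    _ ≤ c * ∑ j ∈ Sᶜ, φ (x j) := mul_le_mul_of_nonneg_left hTS hc

end Rearrangement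

section NullSpace

variable {m n : ℕ} (A : Matrix (Fin m) (Fin n) ℝ) (k : ℕ)

def IsNullSpaceBound (F : (Fin n → ℝ) → ℝ) (c : ℝ) : Prop :=
  ∀ v : Fin n → ℝ, A.mulVec v = 0 → v ≠ 0 → ∀ S : Finset (Fin n), S.card ≤ k →
    F (fun i => if i ∈ S then v i else 0) ≤ c * F (fun i => if i ∈ Sᶜ then v i else 0)

def SparseKernelTrivial : Prop :=
  ∀ v : Fin n → ℝ, A *ᵥ v = 0 → ∀ S : Finset (Fin n), #S ≤ k → (∀ i ∉ S, v i = 0) → v = 0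

variable {A k}

theorem nullSpaceConstant_le_nullSpaceConstant {F G : (Fin n → ℝ) → ℝ}
    (hbound : ∀ c, 0 ≤ c → IsNullSpaceBound A k G c → IsNullSpaceBound A k F c)
    (hexists : (∃ c, 0 ≤ c ∧ IsNullSpaceBound A k F c) → ∃ c, 0 ≤ c ∧ IsNullSpaceBound A k G c) :
    nullSpaceConstant A k F ≤ nullSpaceConstant A k G := by
  change sInf {c | 0 ≤ c ∧ IsNullSpaceBound A k F c} ≤ sInf {c | 0 ≤ c ∧ IsNullSpaceBound A k G c}
  by_cases hG : ∃ c, 0 ≤ c ∧ IsNullSpaceBound A k G c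
  · exact csInf_le_csInf ⟨0, fun c hc => hc.1⟩ hG fun c hc => ⟨hc.1, hbound c hc.1 hc.2⟩
  · have hF : ¬∃ c, 0 ≤ c ∧ IsNullSpaceBound A k F c := mt hexists hG
    rw [not_nonempty_iff_eq_empty.1 hF, not_nonempty_iff_eq_empty.1 hG]

theorem isNullSpaceBound_sum_comp_abs_iff {φ : ℝ → ℝ} (hφ0 : φ 0 = 0) {c : ℝ} :
    IsNullSpaceBound A k (fun x => ∑ i, φ |x i|) c ↔
      ∀ v : Fin n → ℝ, A *ᵥ v = 0 → v ≠ 0 → ∀ S : Finset (Fin n), #S ≤ k →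
        ∑ i ∈ S, φ |v i| ≤ c * ∑ i ∈ Sᶜ, φ |v i| := by
  simp only [IsNullSpaceBound, apply_ite, abs_zero, hφ0, sum_ite_mem, Finset.univ_inter]

theorem IsNullSpaceBound.sum_comp_abs {φ : ℝ → ℝ} (hφ : ConcaveOn ℝ (Ici 0) φ)
    (hφmono : StrictMonoOn φ (Ici 0)) (hφ0 : φ 0 = 0) {c : ℝ} (hc : 0 ≤ c)
    (h : IsNullSpaceBound A k (fun x => ∑ i, |x i|) c) :
    IsNullSpaceBound A k (fun x => ∑ i, φ |x i|) c := by
  replace h := (isNullSpaceBound_sum_comp_abs_iff (φ := fun t => t) rfl).1 h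
  rw [isNullSpaceBound_sum_comp_abs_iff hφ0]
  intro v hv hv0 S hS
  exact sum_le_mul_sum_compl hφ hφmono hφ0 (fun i => abs_nonneg (v i)) hc
    fun T hT => h v hv hv0 T (hT.trans_le hS)

theorem IsNullSpaceBound.sparseKernelTrivial {φ : ℝ → ℝ} (hφ0 : φ 0 = 0)
    (hφpos : ∀ t, 0 < t → 0 < φ t) {c : ℝ}
    (h : IsNullSpaceBound A k (fun x => ∑ i, φ |x i|) c) : SparseKernelTrivial A k := by
  rw [isNullSpaceBound_sum_comp_abs_iff hφ0] at h
  intro v hv S hS hsupp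
  by_contra hv0
  obtain ⟨i, hi⟩ := Function.ne_iff.1 hv0
  have hiS : i ∈ S := by by_contra hiS; exact hi (hsupp i hiS)
  have hpos : 0 < ∑ i ∈ S, φ |v i| :=
    sum_pos' (fun j _ => (abs_nonneg (v j)).eq_or_lt.elim (fun h => by rw [← h, hφ0])
      fun h => (hφpos _ h).le) ⟨i, hiS, hφpos _ (abs_pos.2 hi)⟩
  have hzero : ∑ i ∈ Sᶜ, φ |v i| = 0 :=
    sum_eq_zero fun j hj => by rw [hsupp j (mem_compl.1 hj), abs_zero, hφ0]
  have := h v hv hv0 S hS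
  rw [hzero, mul_zero] at this
  exact this.not_gt hpos

theorem exists_sum_abs_le_mul_sum_abs_compl (S : Finset (Fin n))
    (hS : ∀ v : Fin n → ℝ, A *ᵥ v = 0 → (∀ i ∉ S, v i = 0) → v = 0) :
    ∃ C, ∀ v : Fin n → ℝ, A *ᵥ v = 0 → ∑ i ∈ S, |v i| ≤ C * ∑ i ∈ Sᶜ, |v i| := by
  let f : LinearMap.ker A.mulVecLin →ₗ[ℝ] (↥(Sᶜ) → ℝ) :=
    (LinearMap.funLeft ℝ ℝ Subtype.val).comp (LinearMap.ker A.mulVecLin).subtype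
  have hf : Function.Injective f := by
    refine (injective_iff_map_eq_zero f).2 fun w hw => Subtype.ext ?_
    exact hS w w.2 fun i hi => congr_fun hw ⟨i, mem_compl.2 hi⟩
  obtain ⟨K, -, hK⟩ := f.injective_iff_antilipschitz.1 hf
  refine ⟨#S * K, fun v hv => ?_⟩
  have hfv : ‖f ⟨v, hv⟩‖ ≤ ∑ i ∈ Sᶜ, |v i| :=
    (pi_norm_le_iff_of_nonneg (sum_nonneg fun i _ => abs_nonneg (v i))).2 fun j =>
      single_le_sum (f := fun i => |v i|) (fun i _ => abs_nonneg (v i)) j.2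
  have hS_le : ∑ i ∈ S, |v i| ≤ #S * ‖v‖ := by
    simpa using sum_le_card_nsmul S (fun i => |v i|) ‖v‖ fun i _ => norm_le_pi_norm v i
  calc ∑ i ∈ S, |v i| ≤ #S * ‖v‖ := hS_le
    _ ≤ #S * (K * ∑ i ∈ Sᶜ, |v i|) := by
      gcongr
      exact (hK.le_mul_norm (map_zero f) ⟨v, hv⟩).trans (by gcongr)
    _ = #S * K * ∑ i ∈ Sᶜ, |v i| := by ring

theorem SparseKernelTrivial.exists_isNullSpaceBound_abs (h : SparseKernelTrivial A k) :
    ∃ c, 0 ≤ c ∧ IsNullSpaceBound A k (fun x => ∑ i, |x i|) c := by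
  have hS : ∀ S : Finset (Fin n), ∀ᶠ c in Filter.atTop, #S ≤ k →
      ∀ v : Fin n → ℝ, A *ᵥ v = 0 → ∑ i ∈ S, |v i| ≤ c * ∑ i ∈ Sᶜ, |v i| := by
    intro S
    by_cases hSk : #S ≤ k
    · obtain ⟨C, hC⟩ := exists_sum_abs_le_mul_sum_abs_compl S fun v hv => h v hv S hSk
      filter_upwards [Filter.eventually_ge_atTop C] with c hc _ v hv
      exact (hC v hv).trans
        (mul_le_mul_of_nonneg_right hc (sum_nonneg fun i _ => abs_nonneg (v i)))
    · exact Filter.Eventually.of_forall fun _ hSk' => absurd hSk' hSk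
  obtain ⟨c, hc0, hc⟩ := ((Filter.eventually_ge_atTop 0).and (Filter.eventually_all.2 hS)).exists
  exact ⟨c, hc0, (isNullSpaceBound_sum_comp_abs_iff (φ := fun t => t) rfl).2
    fun v hv _ S hSk => hc S hSk v hv⟩

end NullSpace

section LogOneAddRpow

variable {p q : ℝ}

open Real in
theorem concaveOn_log_one_add_rpow_div (hp : 0 < p) (hq0 : 0 ≤ q) (hq1 : q ≤ 1) :
    ConcaveOn ℝ (Ici 0) fun t => log (1 + t ^ q / p) := by
  refine ⟨convex_Ici 0, fun x (hx : 0 ≤ x) y (hy : 0 ≤ y) a b ha hb hab => ?_⟩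
  have hx' : 0 < 1 + x ^ q / p := by positivity
  have hy' : 0 < 1 + y ^ q / p := by positivity
  calc a • log (1 + x ^ q / p) + b • log (1 + y ^ q / p)
      ≤ log (a • (1 + x ^ q / p) + b • (1 + y ^ q / p)) :=
        strictConcaveOn_log_Ioi.concaveOn.2 hx' hy' ha hb hab
    _ = log (1 + (a • x ^ q + b • y ^ q) / p) := by
        congr 1
        simp only [smul_eq_mul]
        field_simp
        linear_combination p * hab
    _ ≤ log (1 + (a • x + b • y) ^ q / p) := by
        have : 0 ≤ a • x ^ q + b • y ^ q := by simp only [smul_eq_mul]; positivity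
        gcongr
        exact (concaveOn_rpow hq0 hq1).2 hx hy ha hb hab

open Real in
theorem strictMonoOn_log_one_add_rpow_div (hp : 0 < p) (hq : 0 < q) :
    StrictMonoOn (fun t => log (1 + t ^ q / p)) (Ici 0) := fun x (hx : 0 ≤ x) y _ hxy =>
  log_lt_log (by positivity) (by gcongr)

end LogOneAddRpow

/-- the h_{p,q}-null space constant is at most the ℓ₁ null space constant. -/
theorem hpq_nsc_le_l1_nsc (m n k : ℕ) (p q : ℝ)
    (hp : 0 < p) (hq0 : 0 < q) (hq1 : q ≤ 1)
    (A : Matrix (Fin m) (Fin n) ℝ) :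
    nullSpaceConstant A k (fun x => ∑ i, Real.log (1 + |x i| ^ q / p)) ≤
      nullSpaceConstant A k (fun x => ∑ i, |x i|) := by
  have hφ := concaveOn_log_one_add_rpow_div hp hq0.le hq1
  have hφmono := strictMonoOn_log_one_add_rpow_div hp hq0
  have hφ0 : Real.log (1 + (0 : ℝ) ^ q / p) = 0 := by simp [Real.zero_rpow hq0.ne']
  have hφpos : ∀ t : ℝ, 0 < t → 0 < Real.log (1 + t ^ q / p) := fun t ht =>
    hφ0 ▸ hφmono self_mem_Ici ht.le ht
  exact nullSpaceConstant_le_nullSpaceConstant (fun c hc h => h.sum_comp_abs hφ hφmono hφ0 hc)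
    fun ⟨_, _, h⟩ => (h.sparseKernelTrivial hφ0 hφpos).exists_isNullSpaceBound_abs
end

section
/- Let β ∈ ℝⁿ be nonzero, S the index set of its k largest entries in absolute value, p > 0, 0 < q ≤ 1. Then ‖β_S‖_{h_{p,q}} / ‖β_{S^c}‖_{h_{p,q}} ≤ ‖β_S‖₁ / ‖β_{S^c}‖₁, provided β_{S^c} ≠ 0. -/
open Real

/-- Key monotonicity: `t ↦ log(1+t^q/p)/t` is antitone, phrased multiplicatively. -/
lemma key_mono {p q : ℝ} (hp : 0 < p) (hq0 : 0 < q) (hq1 : q ≤ 1)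
    {a b : ℝ} (hb : 0 ≤ b) (hba : b ≤ a) :
    b * Real.log (1 + a ^ q / p) ≤ a * Real.log (1 + b ^ q / p) := by
  rcases eq_or_lt_of_le hb with h0 | h0
  · simp [← h0, Real.zero_rpow hq0.ne']
  have ha : 0 < a := lt_of_lt_of_le h0 hba
  have hr : 1 ≤ a / b := (one_le_div h0).mpr hba
  have hs : 0 ≤ b ^ q / p := div_nonneg (Real.rpow_nonneg hb q) hp.le
  -- a^q ≤ (a/b) * b^q
  have h1 : a ^ q ≤ (a / b) * b ^ q := by
    have : a ^ q / b ^ q ≤ a / b := by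
      rw [← Real.div_rpow ha.le h0.le]
      calc (a / b) ^ q ≤ (a / b) ^ (1 : ℝ) :=
            Real.rpow_le_rpow_of_exponent_le hr hq1
        _ = a / b := Real.rpow_one _
    have hbq : 0 < b ^ q := Real.rpow_pos_of_pos h0 q
    calc a ^ q = a ^ q / b ^ q * b ^ q := by field_simp
      _ ≤ (a / b) * b ^ q := by
          exact mul_le_mul_of_nonneg_right this hbq.le
  -- Bernoulli
  have h2 : 1 + (a / b) * (b ^ q / p) ≤ (1 + b ^ q / p) ^ (a / b) :=
    one_add_mul_self_le_rpow_one_add (by linarith) hr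
  have h3 : Real.log (1 + a ^ q / p) ≤ (a / b) * Real.log (1 + b ^ q / p) := by
    have hpos : (0:ℝ) < 1 + b ^ q / p := by linarith
    calc Real.log (1 + a ^ q / p)
        ≤ Real.log ((1 + b ^ q / p) ^ (a / b)) := by
          apply Real.log_le_log
          · have : 0 ≤ a ^ q / p := div_nonneg (Real.rpow_nonneg ha.le q) hp.le
            linarith
          · calc 1 + a ^ q / p ≤ 1 + (a / b) * b ^ q / p := by
                  gcongr
              _ = 1 + (a / b) * (b ^ q / p) := by rw [mul_div_assoc]
              _ ≤ _ := h2
      _ = (a / b) * Real.log (1 + b ^ q / p) := Real.log_rpow hpos _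
  calc b * Real.log (1 + a ^ q / p) ≤ b * ((a / b) * Real.log (1 + b ^ q / p)) :=
        mul_le_mul_of_nonneg_left h3 h0.le
    _ = a * Real.log (1 + b ^ q / p) := by field_simp

/-- for S the indices of the k largest-in-magnitude entries of β,
the h_{p,q}-ratio is at most the ℓ₁-ratio. -/
theorem hpq_ratio_le_l1_ratio (n k : ℕ) (p q : ℝ)
    (hp : 0 < p) (hq0 : 0 < q) (hq1 : q ≤ 1)
    (β : Fin n → ℝ) (hβ : β ≠ 0)
    (S : Finset (Fin n)) (hcard : S.card = k)
    (hord : ∀ i ∈ S, ∀ j ∈ Sᶜ, |β j| ≤ |β i|)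
    (hSc : ∃ j ∈ Sᶜ, β j ≠ 0) :
    (∑ i ∈ S, Real.log (1 + |β i| ^ q / p)) /
        (∑ i ∈ Sᶜ, Real.log (1 + |β i| ^ q / p)) ≤
      (∑ i ∈ S, |β i|) / (∑ i ∈ Sᶜ, |β i|) := by
  obtain ⟨j₀, hj₀, hj₀ne⟩ := hSc
  have habs : 0 < |β j₀| := abs_pos.mpr hj₀ne
  have hfnonneg : ∀ i : Fin n, 0 ≤ Real.log (1 + |β i| ^ q / p) := fun i => by
    apply Real.log_nonneg
    have : 0 ≤ |β i| ^ q / p := div_nonneg (Real.rpow_nonneg (abs_nonneg _) q) hp.le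
    linarith
  have hfpos : 0 < Real.log (1 + |β j₀| ^ q / p) := by
    apply Real.log_pos
    have : 0 < |β j₀| ^ q / p := div_pos (Real.rpow_pos_of_pos habs q) hp
    linarith
  have hden1 : 0 < ∑ i ∈ Sᶜ, Real.log (1 + |β i| ^ q / p) :=
    Finset.sum_pos' (fun i _ => hfnonneg i) ⟨j₀, hj₀, hfpos⟩
  have hden2 : 0 < ∑ i ∈ Sᶜ, |β i| :=
    Finset.sum_pos' (fun i _ => abs_nonneg _) ⟨j₀, hj₀, habs⟩
  rw [div_le_div_iff₀ hden1 hden2]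
  rw [Finset.sum_mul_sum, Finset.sum_mul_sum]
  rw [Finset.sum_comm (s := S) (t := Sᶜ)]
  rw [show (∑ i ∈ S, ∑ j ∈ Sᶜ, |β i| * Real.log (1 + |β j| ^ q / p)) =
      ∑ j ∈ Sᶜ, ∑ i ∈ S, |β i| * Real.log (1 + |β j| ^ q / p) from Finset.sum_comm]
  apply Finset.sum_le_sum
  intro j hj
  apply Finset.sum_le_sum
  intro i hi
  have := key_mono hp hq0 hq1 (abs_nonneg (β j)) (hord i hi j hj)
  linarith [this]
end

section
/- Suppose the h_{p,q}-null space constant of A at order k satisfies ρ := h_{p,q}(A,k) < 1. Let x ∈ ℝⁿ, and let y be any minimizer of ‖·‖_{h_{p,q}} subject to Az = Ax. Then ‖x − y‖_{h_{p,q}} ≤ (2(1 + ρ)/(1 − ρ)) · σₖ(x)_{h_{p,q}}, where σₖ(x)_{h_{p,q}} = ‖x_{S^c}‖_{h_{p,q}} with S the set of indices of the k largest-in-magnitude entries of x. -/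
section aux
open scoped NNReal

variable {p q : ℝ}

private lemma hpq_f_nonneg (hp : 0 < p) (hq0 : 0 < q) (a : ℝ) :
    0 ≤ Real.log (1 + |a| ^ q / p) := by
  apply Real.log_nonneg
  have : 0 ≤ |a| ^ q / p := div_nonneg (Real.rpow_nonneg (abs_nonneg a) q) hp.le
  linarith

private lemma hpq_rpow_add_le (hq0 : 0 < q) (hq1 : q ≤ 1) {a b : ℝ}
    (ha : 0 ≤ a) (hb : 0 ≤ b) : (a + b) ^ q ≤ a ^ q + b ^ q := by
  have h := NNReal.rpow_add_le_add_rpow a.toNNReal b.toNNReal hq0.le hq1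
  have hcoe : ((a.toNNReal + b.toNNReal : ℝ≥0) : ℝ) = a + b := by
    simp [Real.coe_toNNReal _ ha, Real.coe_toNNReal _ hb]
  have := (NNReal.coe_le_coe).2 h
  rwa [NNReal.coe_add, NNReal.coe_rpow, NNReal.coe_rpow, NNReal.coe_rpow, hcoe,
    Real.coe_toNNReal _ ha, Real.coe_toNNReal _ hb] at this

private lemma hpq_f_subadd (hp : 0 < p) (hq0 : 0 < q) (hq1 : q ≤ 1) (a b : ℝ) :
    Real.log (1 + |a + b| ^ q / p) ≤
      Real.log (1 + |a| ^ q / p) + Real.log (1 + |b| ^ q / p) := by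
  have ha : 0 ≤ |a| ^ q / p := div_nonneg (Real.rpow_nonneg (abs_nonneg a) q) hp.le
  have hb : 0 ≤ |b| ^ q / p := div_nonneg (Real.rpow_nonneg (abs_nonneg b) q) hp.le
  rw [← Real.log_mul (by linarith) (by linarith)]
  apply Real.log_le_log (by positivity)
  have h1 : |a + b| ^ q ≤ |a| ^ q + |b| ^ q := by
    calc |a + b| ^ q ≤ (|a| + |b|) ^ q := by
          exact Real.rpow_le_rpow (abs_nonneg _) (abs_add_le a b) hq0.le
      _ ≤ |a| ^ q + |b| ^ q := hpq_rpow_add_le hq0 hq1 (abs_nonneg a) (abs_nonneg b)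
  have h2 : |a + b| ^ q / p ≤ |a| ^ q / p + |b| ^ q / p := by
    rw [← add_div]
    gcongr
  nlinarith [mul_nonneg ha hb]

end aux

/-- stability of l_{h_{p,q}}-minimization under the null space
property with constant ρ < 1. -/
theorem hpq_stable_recovery (m n k : ℕ) (p q ρ : ℝ)
    (hp : 0 < p) (hq0 : 0 < q) (hq1 : q ≤ 1) (hρ0 : 0 ≤ ρ) (hρ1 : ρ < 1)
    (A : Matrix (Fin m) (Fin n) ℝ)
    (hnsc : ∀ v : Fin n → ℝ, A.mulVec v = 0 →
      ∀ S : Finset (Fin n), S.card ≤ k →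
        ∑ i ∈ S, Real.log (1 + |v i| ^ q / p) ≤
          ρ * ∑ i ∈ Sᶜ, Real.log (1 + |v i| ^ q / p))
    (x y : Fin n → ℝ) (hAy : A.mulVec y = A.mulVec x)
    (hmin : ∀ z : Fin n → ℝ, A.mulVec z = A.mulVec x →
      ∑ i, Real.log (1 + |y i| ^ q / p) ≤ ∑ i, Real.log (1 + |z i| ^ q / p))
    (S : Finset (Fin n)) (hcard : S.card ≤ k)
    (hord : ∀ i ∈ S, ∀ j ∈ Sᶜ, |x j| ≤ |x i|) :
    ∑ i, Real.log (1 + |x i - y i| ^ q / p) ≤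
      (2 * (1 + ρ) / (1 - ρ)) * ∑ i ∈ Sᶜ, Real.log (1 + |x i| ^ q / p) := by
  have hflb : ∀ a b : ℝ, Real.log (1 + |a| ^ q / p) - Real.log (1 + |b| ^ q / p) ≤
      Real.log (1 + |a - b| ^ q / p) := by
    intro a b
    have h := hpq_f_subadd hp hq0 hq1 (a - b) b
    rw [sub_add_cancel] at h
    linarith
  have hAv : A.mulVec (fun i => x i - y i) = 0 := by
    have hxy : (fun i => x i - y i) = x - y := rfl
    rw [hxy, Matrix.mulVec_sub, hAy, sub_self]
  have hNSP := hnsc _ hAv S hcard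
  have hYS : ∑ i ∈ S, (Real.log (1 + |x i| ^ q / p) - Real.log (1 + |x i - y i| ^ q / p))
      ≤ ∑ i ∈ S, Real.log (1 + |y i| ^ q / p) := by
    refine Finset.sum_le_sum fun i _ => ?_
    have h := hflb (x i) (x i - y i)
    simpa using h
  have hYC : ∑ i ∈ Sᶜ, (Real.log (1 + |x i - y i| ^ q / p) - Real.log (1 + |x i| ^ q / p))
      ≤ ∑ i ∈ Sᶜ, Real.log (1 + |y i| ^ q / p) := by
    refine Finset.sum_le_sum fun i _ => ?_
    have h := hflb (x i - y i) (x i)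
    have he : x i - y i - x i = -(y i) := by ring
    rw [he, abs_neg] at h
    exact h
  have hmin' := hmin x rfl
  rw [← Finset.sum_add_sum_compl S (fun i => Real.log (1 + |y i| ^ q / p)),
      ← Finset.sum_add_sum_compl S (fun i => Real.log (1 + |x i| ^ q / p))] at hmin'
  rw [← Finset.sum_add_sum_compl S (fun i => Real.log (1 + |x i - y i| ^ q / p))]
  rw [Finset.sum_sub_distrib] at hYS hYC
  have hAC0 : (0:ℝ) ≤ ∑ i ∈ Sᶜ, Real.log (1 + |x i - y i| ^ q / p) :=
    Finset.sum_nonneg fun i _ => hpq_f_nonneg hp hq0 _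
  have hXC0 : (0:ℝ) ≤ ∑ i ∈ Sᶜ, Real.log (1 + |x i| ^ q / p) :=
    Finset.sum_nonneg fun i _ => hpq_f_nonneg hp hq0 _
  set AS := ∑ i ∈ S, Real.log (1 + |x i - y i| ^ q / p) with hAS
  set AC := ∑ i ∈ Sᶜ, Real.log (1 + |x i - y i| ^ q / p) with hACdef
  set XC := ∑ i ∈ Sᶜ, Real.log (1 + |x i| ^ q / p) with hXCdef
  set XS := ∑ i ∈ S, Real.log (1 + |x i| ^ q / p) with hXSdef
  set YS := ∑ i ∈ S, Real.log (1 + |y i| ^ q / p) with hYSdef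
  set YC := ∑ i ∈ Sᶜ, Real.log (1 + |y i| ^ q / p) with hYCdef
  have h1ρ : (0:ℝ) < 1 - ρ := by linarith
  have hAC : AC ≤ 2 * XC / (1 - ρ) := by
    rw [le_div_iff₀ h1ρ]
    nlinarith
  calc AS + AC ≤ (1 + ρ) * AC := by linarith
    _ ≤ (1 + ρ) * (2 * XC / (1 - ρ)) := by
        exact mul_le_mul_of_nonneg_left hAC (by linarith)
    _ = 2 * (1 + ρ) / (1 - ρ) * XC := by
        field_simp
end

section
/- Fix p > 0, 0 < q ≤ 1, and α > 0. Then for all x ≥ 0: h_{p,q}(x) − (h_{p,q}'(α)/(2α)) x² ≤ h_{p,q}(α) − (α h_{p,q}'(α))/2, where h_{p,q}(x) = log(1 + x^q/p). -/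
/-!
With `d = h'(α)`, the gap `g(y) = h(y) - d / (2α) * y²` has derivative `y * (φ(y) - φ(α))` for
`y > 0`, where `φ(y) = h'(y) / y = q y^(q-2) / (p + y^q)`. Since `q ≤ 2` and `q ≥ 0`, `φ` is a
product of two positive nonincreasing functions, so `g` increases on `[0, α]` and decreases on
`[α, ∞)`, so `g(x) ≤ g(α)`.
-/

open Real Set

noncomputable def hpq (p q x : ℝ) : ℝ := log (1 + x ^ q / p)

noncomputable def hpqDeriv (p q x : ℝ) : ℝ := q * x ^ (q - 1) / (p + x ^ q)

lemma isMaxOn_Ici_of_hasDerivAt {f f' : ℝ → ℝ} {a b : ℝ} (hab : a ≤ b)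
    (hf : ContinuousOn f (Ici a)) (hf' : ∀ y, a < y → HasDerivAt f (f' y) y)
    (hinc : ∀ y ∈ Ioo a b, 0 ≤ f' y) (hdec : ∀ y, b < y → f' y ≤ 0) :
    IsMaxOn f (Ici a) b := by
  have hmono : MonotoneOn f (Icc a b) :=
    monotoneOn_of_hasDerivWithinAt_nonneg (convex_Icc a b) (hf.mono Icc_subset_Ici_self)
      (fun y hy ↦ by
        rw [interior_Icc] at hy
        exact (hf' y hy.1).hasDerivWithinAt)
      (fun y hy ↦ hinc y (by rwa [interior_Icc] at hy))
  have hanti : AntitoneOn f (Ici b) :=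
    antitoneOn_of_hasDerivWithinAt_nonpos (convex_Ici b) (hf.mono (Ici_subset_Ici.2 hab))
      (fun y hy ↦ by
        rw [interior_Ici] at hy
        exact (hf' y (hab.trans_lt hy)).hasDerivWithinAt)
      (fun y hy ↦ hdec y (by rwa [interior_Ici] at hy))
  intro x (hx : a ≤ x)
  rcases le_total x b with hxb | hbx
  · exact hmono ⟨hx, hxb⟩ ⟨hab, le_rfl⟩ hxb
  · exact hanti (mem_Ici.2 le_rfl) hbx hbx

section

variable {p q : ℝ}

lemma hasDerivAt_hpq (hp : 0 < p) {x : ℝ} (hx : 0 < x) :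
    HasDerivAt (hpq p q) (hpqDeriv p q x) x := by
  have hxq : 0 < x ^ q := rpow_pos_of_pos hx q
  have hinner : HasDerivAt (fun y ↦ 1 + y ^ q / p) (q * x ^ (q - 1) / p) x :=
    ((hasDerivAt_rpow_const (Or.inl hx.ne')).div_const p).const_add 1
  refine (hinner.log (by positivity)).congr_deriv ?_
  rw [hpqDeriv]
  field_simp

lemma continuousOn_hpq (hp : 0 < p) (hq : 0 ≤ q) : ContinuousOn (hpq p q) (Ici 0) := by
  refine ContinuousOn.log ?_ fun y (hy : 0 ≤ y) ↦ by positivity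
  exact continuousOn_const.add
    ((continuous_id.rpow_const fun _ ↦ Or.inr hq).continuousOn.div_const p)

lemma hpqDeriv_div_self {x : ℝ} (hx : x ≠ 0) :
    hpqDeriv p q x / x = q * x ^ (q - 2) / (p + x ^ q) := by
  rw [hpqDeriv, div_right_comm, mul_div_assoc, ← rpow_sub_one hx]
  ring_nf

lemma antitoneOn_hpqDeriv_div_self (hp : 0 ≤ p) (hq0 : 0 ≤ q) (hq2 : q ≤ 2) :
    AntitoneOn (fun x ↦ hpqDeriv p q x / x) (Ioi 0) := by
  intro y (hy : 0 < y) z (hz : 0 < z) hyz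
  simp only [hpqDeriv_div_self hy.ne', hpqDeriv_div_self hz.ne']
  have hpow : z ^ (q - 2) ≤ y ^ (q - 2) := rpow_le_rpow_of_nonpos hy hyz (by linarith)
  gcongr

end

/-- quadratic majorization of h_{p,q} at α > 0. -/
theorem hpq_quadratic_majorization (p q α : ℝ)
    (hp : 0 < p) (hq0 : 0 < q) (hq1 : q ≤ 1) (hα : 0 < α) (x : ℝ) (hx : 0 ≤ x) :
    Real.log (1 + x ^ q / p) - (q * α ^ (q - 1) / (p + α ^ q)) / (2 * α) * x ^ 2 ≤
      Real.log (1 + α ^ q / p) - α * (q * α ^ (q - 1) / (p + α ^ q)) / 2 := by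
  change hpq p q x - hpqDeriv p q α / (2 * α) * x ^ 2 ≤ hpq p q α - α * hpqDeriv p q α / 2
  set g : ℝ → ℝ := fun y ↦ hpq p q y - hpqDeriv p q α / (2 * α) * y ^ 2
  have hanti := antitoneOn_hpqDeriv_div_self hp.le hq0.le (by linarith)
  have hg' : ∀ y, 0 < y →
      HasDerivAt g (y * (hpqDeriv p q y / y - hpqDeriv p q α / α)) y := fun y hy ↦ by
    refine ((hasDerivAt_hpq hp hy).sub ((hasDerivAt_pow 2 y).const_mul _)).congr_deriv ?_
    field_simp
    ring
  have hmax : IsMaxOn g (Ici 0) α := isMaxOn_Ici_of_hasDerivAt hα.le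
    ((continuousOn_hpq hp hq0.le).sub (by fun_prop)) hg'
    (fun y hy ↦ mul_nonneg hy.1.le (sub_nonneg.2 (hanti hy.1 hα hy.2.le)))
    (fun y hy ↦ mul_nonpos_of_nonneg_of_nonpos (hα.trans hy).le
      (sub_nonpos.2 (hanti hα (hα.trans hy) hy.le)))
  have hgα : hpq p q α - α * hpqDeriv p q α / 2 = g α := by
    simp only [g]
    field_simp
  rw [hgα]
  exact isMaxOn_iff.1 hmax x hx
end

section
/- Let A ∈ ℝ^{m×n} (m < n), b ∈ ℝ^m, p > 0, 0 < q ≤ 1, and let x* be a minimizer of ‖x‖_{h_{p,q}} = Σᵢ log(1 + |xᵢ|^q/p) subject to Ax = b. Then the columns of A indexed by the support S of x* are linearly independent. -/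
open Real Set

private lemma hpq_strictConcave {p q : ℝ} (hp : 0 < p) (hq0 : 0 < q) (hq1 : q ≤ 1) :
    StrictConcaveOn ℝ (Set.Ioi (0:ℝ)) (fun t : ℝ => Real.log (1 + t ^ q / p)) := by
  have hder : ∀ t ∈ Set.Ioi (0:ℝ),
      HasDerivAt (fun t : ℝ => Real.log (1 + t ^ q / p))
        ((q * t ^ (q - 1) / p) / (1 + t ^ q / p)) t := by
    intro t ht
    have h1 : HasDerivAt (fun t : ℝ => t ^ q) (q * t ^ (q - 1)) t :=
      Real.hasDerivAt_rpow_const (Or.inl (ne_of_gt ht))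
    have h3 : (1 : ℝ) + t ^ q / p ≠ 0 := by
      have := Real.rpow_pos_of_pos ht q
      positivity
    exact ((h1.div_const p).const_add 1).log h3
  apply StrictAntiOn.strictConcaveOn_of_deriv (convex_Ioi 0)
  · intro t ht
    apply ContinuousWithinAt.log
    · exact (continuousWithinAt_const.add
        (((Real.continuousAt_rpow_const t q (Or.inl (ne_of_gt ht))).continuousWithinAt).div_const p))
    · have := Real.rpow_pos_of_pos ht q
      positivity
  · rw [interior_Ioi]
    intro a ha b hb hab
    rw [HasDerivAt.deriv (hder b hb), HasDerivAt.deriv (hder a ha)]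
    have ha' : (0:ℝ) < a := ha
    have hb' : (0:ℝ) < b := hb
    have haq : (0:ℝ) < a ^ q := Real.rpow_pos_of_pos ha' q
    have hbq : (0:ℝ) < b ^ q := Real.rpow_pos_of_pos hb' q
    have ha1 : (0:ℝ) < a ^ (q - 1) := Real.rpow_pos_of_pos ha' _
    have hb1 : (0:ℝ) < b ^ (q - 1) := Real.rpow_pos_of_pos hb' _
    have e1 : ∀ t : ℝ, 0 < t ^ q → (q * t ^ (q-1) / p) / (1 + t ^ q / p)
        = q * t ^ (q-1) / (p + t ^ q) := by
      intro t ht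
      rw [div_div]
      congr 1
      field_simp
    rw [e1 a haq, e1 b hbq]
    rw [div_lt_div_iff₀ (by positivity) (by positivity)]
    have hle : b ^ (q - 1) ≤ a ^ (q - 1) :=
      Real.rpow_le_rpow_of_nonpos ha' (le_of_lt hab) (by linarith)
    have hlt : a ^ q < b ^ q := Real.rpow_lt_rpow (le_of_lt ha') hab hq0
    nlinarith [mul_le_mul_of_nonneg_right hle (by positivity : (0:ℝ) ≤ p + a ^ q),
      mul_lt_mul_of_pos_left hlt (by positivity : (0:ℝ) < q * a ^ (q - 1))]

private lemma hpq_key {p q : ℝ} (hp : 0 < p) (hq0 : 0 < q) (hq1 : q ≤ 1)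
    {x s : ℝ} (hx : x ≠ 0) (hs : |s| < |x|) (hs0 : s ≠ 0) :
    Real.log (1 + |x + s| ^ q / p) + Real.log (1 + |x - s| ^ q / p)
      < 2 * Real.log (1 + |x| ^ q / p) := by
  have hcon := hpq_strictConcave hp hq0 hq1
  set a := |x + s| with ha_def
  set b := |x - s| with hb_def
  have hapos : 0 < a := by
    rw [ha_def, abs_pos]
    intro h0
    rw [show s = -x by linarith] at hs
    rw [abs_neg] at hs
    exact lt_irrefl _ hs
  have hbpos : 0 < b := by
    rw [hb_def, abs_pos]
    intro h0
    rw [show s = x by linarith] at hs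
    exact lt_irrefl _ hs
  have habs : a + b = 2 * |x| ∧ a ≠ b := by
    rcases hx.lt_or_gt with hneg | hpos
    · rw [abs_of_neg hneg] at hs
      obtain ⟨hs1, hs2⟩ := abs_lt.mp hs
      have h1 : x + s < 0 := by linarith
      have h2 : x - s < 0 := by linarith
      refine ⟨?_, ?_⟩
      · rw [ha_def, hb_def, abs_of_neg h1, abs_of_neg h2, abs_of_neg hneg]; ring
      · rw [ha_def, hb_def, abs_of_neg h1, abs_of_neg h2]
        intro hcontra
        exact hs0 (by linarith)
    · rw [abs_of_pos hpos] at hs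
      obtain ⟨hs1, hs2⟩ := abs_lt.mp hs
      have h1 : 0 < x + s := by linarith
      have h2 : 0 < x - s := by linarith
      refine ⟨?_, ?_⟩
      · rw [ha_def, hb_def, abs_of_pos h1, abs_of_pos h2, abs_of_pos hpos]; ring
      · rw [ha_def, hb_def, abs_of_pos h1, abs_of_pos h2]
        intro hcontra
        exact hs0 (by linarith)
  obtain ⟨hsum, hab⟩ := habs
  have hmid : (1/2 : ℝ) • a + (1/2 : ℝ) • b = |x| := by
    simp only [smul_eq_mul]; linarith
  have := hcon.2 (show a ∈ Set.Ioi (0:ℝ) from hapos) (show b ∈ Set.Ioi (0:ℝ) from hbpos)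
    hab (by norm_num : (0:ℝ) < 1/2) (by norm_num : (0:ℝ) < 1/2) (by norm_num)
  rw [hmid] at this
  simp only [smul_eq_mul] at this
  linarith

/-- a minimizer of the h_{p,q}-norm over {x : Ax = b} has
linearly independent support columns. -/
theorem minimizer_support_linearIndependent (m n : ℕ) (hmn : m < n) (p q : ℝ)
    (hp : 0 < p) (hq0 : 0 < q) (hq1 : q ≤ 1)
    (A : Matrix (Fin m) (Fin n) ℝ) (b : Fin m → ℝ)
    (xstar : Fin n → ℝ) (hfeas : A.mulVec xstar = b)
    (hmin : ∀ z : Fin n → ℝ, A.mulVec z = b →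
      ∑ i, Real.log (1 + |xstar i| ^ q / p) ≤ ∑ i, Real.log (1 + |z i| ^ q / p)) :
    LinearIndependent ℝ (fun i : {i : Fin n // xstar i ≠ 0} => fun j => A j i.1) := by
  classical
  by_contra hdep
  rw [Fintype.not_linearIndependent_iff] at hdep
  obtain ⟨g, hgsum, i₀, hgi₀⟩ := hdep
  -- extend g to all of Fin n
  set h : Fin n → ℝ := fun j => if hj : xstar j ≠ 0 then g ⟨j, hj⟩ else 0 with hh_def
  have hh_supp : ∀ j, xstar j = 0 → h j = 0 := by
    intro j hj; simp [hh_def, hj]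
  have hh_val : ∀ (j : {i : Fin n // xstar i ≠ 0}), h j.1 = g j := by
    intro j; simp [hh_def, j.2]
  have hhi₀ : h i₀.1 ≠ 0 := by rw [hh_val i₀]; exact hgi₀
  -- A h = 0
  have hAh : A.mulVec h = 0 := by
    funext j
    have h0 := congrFun hgsum j
    simp only [Finset.sum_apply, Pi.smul_apply, Pi.zero_apply, smul_eq_mul] at h0
    show (∑ k, A j k * h k) = 0
    calc ∑ k, A j k * h k
        = ∑ k ∈ Finset.univ.filter (fun k => xstar k ≠ 0), A j k * h k := by
          refine (Finset.sum_subset (Finset.filter_subset _ _) ?_).symm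
          intro k _ hk
          simp only [Finset.mem_filter, Finset.mem_univ, true_and, not_not] at hk
          rw [hh_supp k hk, mul_zero]
      _ = ∑ i : {i : Fin n // xstar i ≠ 0}, A j i.1 * h i.1 :=
          Finset.sum_subtype _ (by simp) _
      _ = ∑ i : {i : Fin n // xstar i ≠ 0}, g i * A j i.1 := by
          refine Finset.sum_congr rfl fun i _ => ?_
          rw [hh_val i]; ring
      _ = 0 := h0
  -- choose a small step size α
  have hn : 0 < n := lt_of_le_of_lt (Nat.zero_le m) hmn
  haveI : Nonempty (Fin n) := ⟨⟨0, hn⟩⟩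
  have hne : (Finset.univ : Finset (Fin n)).Nonempty := Finset.univ_nonempty
  set e : Fin n → ℝ := fun i => if xstar i = 0 then 1 else |xstar i| / (2 * (|h i| + 1))
    with he_def
  set α : ℝ := Finset.univ.inf' hne e with hα_def
  have hα0 : 0 < α := by
    rw [hα_def, Finset.lt_inf'_iff]
    intro i _
    rw [he_def]
    by_cases hi : xstar i = 0
    · simp [hi]
    · simp only [hi, if_false]
      have : 0 < |xstar i| := abs_pos.mpr hi
      positivity
  have hαsmall : ∀ i : Fin n, xstar i ≠ 0 → |α * h i| < |xstar i| := by
    intro i hi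
    have h1 : α ≤ e i := Finset.inf'_le _ (Finset.mem_univ i)
    rw [he_def] at h1
    simp only [hi, if_false] at h1
    have h2 : (0:ℝ) < |xstar i| := abs_pos.mpr hi
    have h3 : (0:ℝ) ≤ |h i| := abs_nonneg _
    rw [abs_mul, abs_of_pos hα0]
    have h4 : α * |h i| ≤ |xstar i| / (2 * (|h i| + 1)) * |h i| :=
      mul_le_mul_of_nonneg_right h1 h3
    have h5 : |xstar i| / (2 * (|h i| + 1)) * |h i| < |xstar i| := by
      rw [div_mul_eq_mul_div, div_lt_iff₀ (by positivity)]
      nlinarith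
    linarith
  -- the two perturbed points
  set zp : Fin n → ℝ := xstar + α • h with hzp_def
  set zm : Fin n → ℝ := xstar - α • h with hzm_def
  have hzpf : A.mulVec zp = b := by
    rw [hzp_def, Matrix.mulVec_add, Matrix.mulVec_smul, hAh, hfeas]
    simp
  have hzmf : A.mulVec zm = b := by
    rw [hzm_def, sub_eq_add_neg, Matrix.mulVec_add, Matrix.mulVec_neg, Matrix.mulVec_smul,
      hAh, hfeas]
    simp
  -- per-index comparison
  have hle : ∀ i : Fin n,
      Real.log (1 + |zp i| ^ q / p) + Real.log (1 + |zm i| ^ q / p)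
        ≤ 2 * Real.log (1 + |xstar i| ^ q / p) := by
    intro i
    by_cases hhi : h i = 0
    · have e1 : zp i = xstar i := by simp [hzp_def, hhi]
      have e2 : zm i = xstar i := by simp [hzm_def, hhi]
      rw [e1, e2]
      linarith
    · have hxi : xstar i ≠ 0 := by
        intro h0
        exact hhi (hh_supp i h0)
      have hslt : |α * h i| < |xstar i| := hαsmall i hxi
      have hs0 : α * h i ≠ 0 := mul_ne_zero (ne_of_gt hα0) hhi
      have := hpq_key hp hq0 hq1 hxi hslt hs0
      have e1 : zp i = xstar i + α * h i := by simp [hzp_def, smul_eq_mul]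
      have e2 : zm i = xstar i - α * h i := by simp [hzm_def, smul_eq_mul]
      rw [e1, e2]
      linarith
  have hstrict :
      Real.log (1 + |zp i₀.1| ^ q / p) + Real.log (1 + |zm i₀.1| ^ q / p)
        < 2 * Real.log (1 + |xstar i₀.1| ^ q / p) := by
    have hslt : |α * h i₀.1| < |xstar i₀.1| := hαsmall i₀.1 i₀.2
    have hs0 : α * h i₀.1 ≠ 0 := mul_ne_zero (ne_of_gt hα0) hhi₀
    have := hpq_key hp hq0 hq1 i₀.2 hslt hs0
    have e1 : zp i₀.1 = xstar i₀.1 + α * h i₀.1 := by simp [hzp_def, smul_eq_mul]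
    have e2 : zm i₀.1 = xstar i₀.1 - α * h i₀.1 := by simp [hzm_def, smul_eq_mul]
    rw [e1, e2]
    linarith
  have hsumlt : ∑ i, (Real.log (1 + |zp i| ^ q / p) + Real.log (1 + |zm i| ^ q / p))
      < ∑ i, 2 * Real.log (1 + |xstar i| ^ q / p) :=
    Finset.sum_lt_sum (fun i _ => hle i) ⟨i₀.1, Finset.mem_univ _, hstrict⟩
  rw [Finset.sum_add_distrib] at hsumlt
  have hm1 := hmin zp hzpf
  have hm2 := hmin zm hzmf
  rw [← Finset.mul_sum] at hsumlt
  linarith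
end

section
/- Fix p > 0, 0 < q ≤ 1, and vectors x, y ∈ ℝⁿ with ‖x‖₀ < ‖y‖₀ (x has strictly fewer nonzero entries than y). Then there exists p* > 0 such that for all p' ∈ (0, p*), ‖x‖_{h_{p',q}} < ‖y‖_{h_{p',q}}. -/
open scoped Classical

/-- a strictly sparser vector has strictly smaller h_{p,q}-norm
for all sufficiently small p. -/
theorem sparser_implies_smaller_hnorm (n : ℕ) (q : ℝ) (hq0 : 0 < q) (hq1 : q ≤ 1)
    (x y : Fin n → ℝ)
    (hsparse : (Finset.univ.filter fun i => x i ≠ 0).card <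
      (Finset.univ.filter fun i => y i ≠ 0).card) :
    ∃ pstar : ℝ, 0 < pstar ∧ ∀ p' : ℝ, 0 < p' → p' < pstar →
      ∑ i, Real.log (1 + |x i| ^ q / p') < ∑ i, Real.log (1 + |y i| ^ q / p') := by
  set S := Finset.univ.filter fun i => x i ≠ 0 with hS
  set T := Finset.univ.filter fun i => y i ≠ 0 with hT
  set Cx := ∑ i ∈ S, Real.log (1 + |x i| ^ q) with hCx
  set Cy := ∑ i ∈ T, Real.log (|y i| ^ q) with hCy
  refine ⟨min 1 (Real.exp (Cy - Cx)), lt_min one_pos (Real.exp_pos _), ?_⟩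
  intro p' hp0 hps
  have hp1 : p' < 1 := lt_of_lt_of_le hps (min_le_left _ _)
  have hpe : p' < Real.exp (Cy - Cx) := lt_of_lt_of_le hps (min_le_right _ _)
  have hlogp : Real.log p' < Cy - Cx := by
    have := Real.log_lt_log hp0 hpe
    rwa [Real.log_exp] at this
  have hL0 : Real.log p' < 0 := Real.log_neg hp0 hp1
  have hxsum : ∑ i, Real.log (1 + |x i| ^ q / p')
      = ∑ i ∈ S, Real.log (1 + |x i| ^ q / p') := by
    rw [eq_comm]
    apply Finset.sum_subset (Finset.subset_univ S)
    intro i _ hi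
    have hx0 : x i = 0 := by
      by_contra h
      exact hi (by simp [hS, h])
    simp [hx0, Real.zero_rpow hq0.ne']
  have hysum : ∑ i, Real.log (1 + |y i| ^ q / p')
      = ∑ i ∈ T, Real.log (1 + |y i| ^ q / p') := by
    rw [eq_comm]
    apply Finset.sum_subset (Finset.subset_univ T)
    intro i _ hi
    have hy0 : y i = 0 := by
      by_contra h
      exact hi (by simp [hT, h])
    simp [hy0, Real.zero_rpow hq0.ne']
  have hxb : ∑ i ∈ S, Real.log (1 + |x i| ^ q / p')
      ≤ Cx - S.card * Real.log p' := by
    have hterm : ∀ i ∈ S, Real.log (1 + |x i| ^ q / p')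
        ≤ Real.log (1 + |x i| ^ q) - Real.log p' := by
      intro i _
      have ha : 0 ≤ |x i| ^ q := Real.rpow_nonneg (abs_nonneg _) q
      rw [← Real.log_div (by positivity) hp0.ne']
      apply Real.log_le_log (by positivity)
      rw [add_div]
      have h1 : (1 : ℝ) ≤ 1 / p' := by
        rw [le_div_iff₀ hp0]; linarith
      linarith
    calc ∑ i ∈ S, Real.log (1 + |x i| ^ q / p')
        ≤ ∑ i ∈ S, (Real.log (1 + |x i| ^ q) - Real.log p') :=
          Finset.sum_le_sum hterm
      _ = Cx - S.card * Real.log p' := by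
          rw [Finset.sum_sub_distrib, Finset.sum_const, nsmul_eq_mul]
  have hyb : Cy - T.card * Real.log p'
      ≤ ∑ i ∈ T, Real.log (1 + |y i| ^ q / p') := by
    have hterm : ∀ i ∈ T, Real.log (|y i| ^ q) - Real.log p'
        ≤ Real.log (1 + |y i| ^ q / p') := by
      intro i hi
      have hy : y i ≠ 0 := by
        simp only [hT, Finset.mem_filter] at hi
        exact hi.2
      have hb : 0 < |y i| ^ q := Real.rpow_pos_of_pos (abs_pos.mpr hy) q
      rw [← Real.log_div hb.ne' hp0.ne']
      apply Real.log_le_log (by positivity)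
      have : 0 ≤ |y i| ^ q / p' := by positivity
      linarith
    calc Cy - T.card * Real.log p'
        = ∑ i ∈ T, (Real.log (|y i| ^ q) - Real.log p') := by
          rw [Finset.sum_sub_distrib, Finset.sum_const, nsmul_eq_mul]
      _ ≤ ∑ i ∈ T, Real.log (1 + |y i| ^ q / p') := Finset.sum_le_sum hterm
  rw [hxsum, hysum]
  have hkm : (S.card : ℝ) + 1 ≤ (T.card : ℝ) := by
    exact_mod_cast Nat.succ_le_of_lt hsparse
  have key : Cx - S.card * Real.log p' < Cy - T.card * Real.log p' := by
    nlinarith [mul_nonneg (by linarith : (0:ℝ) ≤ (T.card : ℝ) - ((S.card : ℝ) + 1))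
      (by linarith : 0 ≤ -Real.log p')]
  linarith
end

section
/- Let h(λ) = f(x + λy) where f : ℝⁿ → ℝ is convex, and suppose there is a sequence λₙ → ∞ with h(λₙ) bounded above by some constant a. Then the direction (1) lies in the recession cone of the epigraph of h. -/
/-- if h(λ) = f(x + λy) with f convex is bounded above along a
sequence tending to +∞, then h is nonincreasing. -/
theorem convex_bounded_on_seq_antitone {n : ℕ} (f : (Fin n → ℝ) → ℝ)
    (hf : ConvexOn ℝ Set.univ f) (x y : Fin n → ℝ) (a : ℝ) (u : ℕ → ℝ)
    (hu : Filter.Tendsto u Filter.atTop Filter.atTop)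
    (hbdd : ∀ k : ℕ, f (x + u k • y) ≤ a) :
    ∀ lam mu : ℝ, 0 < mu → f (x + (lam + mu) • y) ≤ f (x + lam • y) := by
  intro lam mu hmu
  set c := f (x + lam • y) with hc
  set t : ℕ → ℝ := fun k => mu / (u k - lam) with ht
  have hsub : Filter.Tendsto (fun k => u k - lam) Filter.atTop Filter.atTop :=
    hu.atTop_add tendsto_const_nhds
  have ht0 : Filter.Tendsto t Filter.atTop (nhds 0) :=
    Filter.Tendsto.div_atTop tendsto_const_nhds hsub
  have hlim : Filter.Tendsto (fun k => (1 - t k) * c + t k * a) Filter.atTop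
      (nhds c) := by
    have : Filter.Tendsto (fun k => (1 - t k) * c + t k * a) Filter.atTop
        (nhds ((1 - 0) * c + 0 * a)) :=
      (((tendsto_const_nhds.sub ht0).mul tendsto_const_nhds).add
        (ht0.mul tendsto_const_nhds))
    simpa using this
  refine ge_of_tendsto hlim ?_
  have hev : ∀ᶠ k in Filter.atTop, lam + mu < u k :=
    hu.eventually_gt_atTop (lam + mu)
  filter_upwards [hev] with k hk
  have hd : 0 < u k - lam := by linarith
  have htk0 : 0 ≤ t k := le_of_lt (div_pos hmu hd)
  have htk1 : t k ≤ 1 := by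
    rw [ht]
    rw [div_le_one hd]
    linarith
  have hcomb := hf.2 (Set.mem_univ (x + lam • y)) (Set.mem_univ (x + u k • y))
    (by linarith : (0:ℝ) ≤ 1 - t k) htk0 (by ring)
  have heq : (1 - t k) • (x + lam • y) + t k • (x + u k • y)
      = x + (lam + mu) • y := by
    have : (1 - t k) * lam + t k * u k = lam + mu := by
      have : t k * (u k - lam) = mu := by
        rw [ht]; field_simp
      nlinarith [this]
    rw [smul_add, smul_add, smul_smul, smul_smul, ← this]
    module
  rw [heq, smul_eq_mul, smul_eq_mul] at hcomb
  calc f (x + (lam + mu) • y) ≤ (1 - t k) * c + t k * f (x + u k • y) := hcomb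
    _ ≤ (1 - t k) * c + t k * a := by
        have := hbdd k
        nlinarith
end
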